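/- Non-uniform smoothness between iterates: let θ ∈ ℝ^K, a₀ ∈ {1,…,K}, x ∈ [−R_max, R_max], and η ∈ (0, 2/(9·R_max)). Set θ' = θ + η·g(θ, a₀, x). Then the Bregman divergence satisfies |(π_{θ'} − π_θ)^⊤ r − ⟨∇(θ), θ' − θ⟩| ≤ (3 / (2 − 9·R_max·η)) · ‖∇(θ)‖₂ · ‖θ' − θ‖₂². -/

import Mathlib

open MeasureTheory Finset Real

/-- Softmax policy. -/
noncomputable def softmax {K : ℕ} (θ : Fin K → ℝ) (a : Fin K) : ℝ :=
  Real.exp (θ a) / ∑ a' : Fin K, Real.exp (θ a')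

/-- Expected reward `π_θ^⊤ r`. -/
noncomputable def value {K : ℕ} (r θ : Fin K → ℝ) : ℝ :=
  ∑ a : Fin K, softmax θ a * r a

/-- True gradient of `θ ↦ π_θ^⊤ r`. -/
noncomputable def pgrad {K : ℕ} (r θ : Fin K → ℝ) (a : Fin K) : ℝ :=
  softmax θ a * (r a - value r θ)

/-- Stochastic gradient. -/
noncomputable def sgrad {K : ℕ} (θ : Fin K → ℝ) (a₀ : Fin K) (x : ℝ) (a : Fin K) : ℝ :=
  ((if a = a₀ then (1 : ℝ) else 0) - softmax θ a) * x

/-- Euclidean norm on `ℝ^K`. -/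
noncomputable def norm2 {K : ℕ} (v : Fin K → ℝ) : ℝ :=
  Real.sqrt (∑ a : Fin K, (v a) ^ 2)

/-!
Write `δ = θ' - θ`. Along the segment `θ + t • δ` the value `V t = π_{θ+tδ}^⊤ r` has derivative
`⟨∇(θ + t • δ), δ⟩`, and the gradient moves with velocity `hessVec r (θ + t • δ) δ`, of norm at most
`3 ‖δ‖ ‖∇(θ + t • δ)‖`. Grönwall's inequality therefore gives `‖∇(θ + t • δ)‖ ≤ e^{3‖δ‖t} ‖∇(θ)‖`,
and Taylor's theorem with Lagrange remainder, `V 1 - V 0 - V' 0 = V'' c / 2`, bounds the Bregman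
divergence by `(3/2) e^{3‖δ‖} ‖∇(θ)‖ ‖δ‖²`. For the stochastic step `‖δ‖ ≤ √2 η R_max ≤ (3/2) η R_max`,
and `e^{3‖δ‖} ≤ 1 / (1 - 3‖δ‖)` turns the constant into `3 / (2 - 9 R_max η)`.
-/

section

variable {K : ℕ}

theorem norm2_eq_norm (v : Fin K → ℝ) : norm2 v = ‖WithLp.toLp 2 v‖ := by
  simp [norm2, EuclideanSpace.norm_eq]

theorem norm2_nonneg (v : Fin K → ℝ) : 0 ≤ norm2 v := Real.sqrt_nonneg _

theorem abs_le_norm2 (v : Fin K → ℝ) (a : Fin K) : |v a| ≤ norm2 v := by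
  rw [← Real.sqrt_sq_eq_abs]
  exact Real.sqrt_le_sqrt (single_le_sum (fun b _ => sq_nonneg (v b)) (mem_univ a))

theorem norm2_le_norm2_of_abs_le {u v : Fin K → ℝ} (h : ∀ a, |u a| ≤ |v a|) :
    norm2 u ≤ norm2 v :=
  Real.sqrt_le_sqrt (sum_le_sum fun a _ => sq_le_sq.mpr (h a))

theorem norm2_mul_const (v : Fin K → ℝ) (c : ℝ) :
    norm2 (fun a => v a * c) = norm2 v * |c| := by
  simp_rw [norm2, mul_pow, ← sum_mul, Real.sqrt_mul (sum_nonneg fun a _ => sq_nonneg (v a)),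
    Real.sqrt_sq_eq_abs]

theorem norm2_sub_le (u v : Fin K → ℝ) :
    norm2 (fun a => u a - v a) ≤ norm2 u + norm2 v := by
  rw [norm2_eq_norm, norm2_eq_norm, norm2_eq_norm]
  exact norm_sub_le (WithLp.toLp 2 u) (WithLp.toLp 2 v)

theorem abs_sum_mul_le_norm2_mul_norm2 (u v : Fin K → ℝ) :
    |∑ a, u a * v a| ≤ norm2 u * norm2 v := by
  refine abs_le.mpr ⟨?_, Real.sum_mul_le_sqrt_mul_sqrt _ u v⟩
  have := Real.sum_mul_le_sqrt_mul_sqrt univ (-u) v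
  simp only [Pi.neg_apply, neg_mul, sum_neg_distrib, neg_sq] at this
  rw [norm2, norm2]; linarith

theorem softmax_nonneg (θ : Fin K → ℝ) (a : Fin K) : 0 ≤ softmax θ a := by
  unfold softmax; positivity

theorem sum_softmax_le_one (θ : Fin K → ℝ) : ∑ a, softmax θ a ≤ 1 := by
  simp only [softmax, ← sum_div]
  exact div_self_le_one _

theorem softmax_le_one (θ : Fin K → ℝ) (a : Fin K) : softmax θ a ≤ 1 :=
  (single_le_sum (fun b _ => softmax_nonneg θ b) (mem_univ a)).trans (sum_softmax_le_one θ)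

theorem norm2_softmax_le_one (θ : Fin K → ℝ) : norm2 (softmax θ) ≤ 1 := by
  refine Real.sqrt_le_one.mpr ((sum_le_sum fun a _ => ?_).trans (sum_softmax_le_one θ))
  exact pow_le_of_le_one (softmax_nonneg θ a) (softmax_le_one θ a) two_ne_zero

theorem abs_value_le_norm2 (v θ : Fin K → ℝ) : |value v θ| ≤ norm2 v :=
  calc |value v θ| ≤ ∑ a, softmax θ a * norm2 v := by
        refine (abs_sum_le_sum_abs _ _).trans (sum_le_sum fun a _ => ?_)
        rw [abs_mul, abs_of_nonneg (softmax_nonneg θ a)]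
        exact mul_le_mul_of_nonneg_left (abs_le_norm2 v a) (softmax_nonneg θ a)
    _ ≤ norm2 v := by
        rw [← sum_mul]
        exact mul_le_of_le_one_left (norm2_nonneg v) (sum_softmax_le_one θ)

theorem sum_pgrad_mul_comm (u v θ : Fin K → ℝ) :
    ∑ a, pgrad u θ a * v a = ∑ a, pgrad v θ a * u a := by
  have hexpand : ∀ w z : Fin K → ℝ, ∑ a, pgrad w θ a * z a
      = ∑ a, softmax θ a * w a * z a - value w θ * ∑ a, softmax θ a * z a := by
    intro w z
    rw [mul_sum, ← sum_sub_distrib]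
    exact sum_congr rfl fun a _ => by unfold pgrad; ring
  rw [hexpand, hexpand, value, value]
  simp only [mul_right_comm _ (u _)]
  ring

theorem hasDerivAt_exp_line (θ δ : Fin K → ℝ) (t : ℝ) (a : Fin K) :
    HasDerivAt (fun s => exp ((θ + s • δ) a)) (exp ((θ + t • δ) a) * δ a) t := by
  simpa using ((hasDerivAt_id t).mul_const (δ a)).const_add (θ a) |>.exp

theorem hasDerivAt_softmax_line (θ δ : Fin K → ℝ) (t : ℝ) (a : Fin K) :
    HasDerivAt (fun s => softmax (θ + s • δ) a) (pgrad δ (θ + t • δ) a) t := by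
  have hZ : ∑ b, exp ((θ + t • δ) b) ≠ 0 :=
    ((single_le_sum (fun b _ => (exp_pos _).le) (mem_univ a)).trans_lt' (exp_pos _)).ne'
  refine ((hasDerivAt_exp_line θ δ t a).fun_div
    (HasDerivAt.fun_sum fun b _ => hasDerivAt_exp_line θ δ t b) hZ).congr_deriv ?_
  simp only [pgrad, value, softmax, div_mul_eq_mul_div, ← sum_div]
  field_simp

theorem hasDerivAt_value_line (r θ δ : Fin K → ℝ) (t : ℝ) :
    HasDerivAt (fun s => value r (θ + s • δ)) (∑ a, pgrad r (θ + t • δ) a * δ a) t := by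
  rw [sum_pgrad_mul_comm]
  exact HasDerivAt.fun_sum fun a _ => (hasDerivAt_softmax_line θ δ t a).mul_const (r a)

noncomputable def hessVec (r θ δ : Fin K → ℝ) (a : Fin K) : ℝ :=
  pgrad r θ a * (δ a - value δ θ) - softmax θ a * ∑ b, pgrad r θ b * δ b

theorem hasDerivAt_pgrad_line (r θ δ : Fin K → ℝ) (t : ℝ) (a : Fin K) :
    HasDerivAt (fun s => pgrad r (θ + s • δ) a) (hessVec r (θ + t • δ) δ a) t := by
  refine ((hasDerivAt_softmax_line θ δ t a).mul
    ((hasDerivAt_value_line r θ δ t).const_sub (r a))).congr_deriv ?_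
  simp only [hessVec, pgrad]
  ring

theorem norm2_hessVec_le (r θ δ : Fin K → ℝ) :
    norm2 (hessVec r θ δ) ≤ 3 * norm2 δ * norm2 (pgrad r θ) := by
  have hcentered : norm2 (fun a => pgrad r θ a * (δ a - value δ θ))
      ≤ norm2 (pgrad r θ) * (2 * norm2 δ) := by
    have h2d : 0 ≤ 2 * norm2 δ := mul_nonneg zero_le_two (norm2_nonneg δ)
    rw [← abs_of_nonneg h2d, ← norm2_mul_const]
    refine norm2_le_norm2_of_abs_le fun a => ?_
    rw [abs_mul, abs_mul, abs_of_nonneg h2d, two_mul]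
    exact mul_le_mul_of_nonneg_left ((abs_sub _ _).trans
      (add_le_add (abs_le_norm2 δ a) (abs_value_le_norm2 δ θ))) (abs_nonneg _)
  have hshift : norm2 (fun a => softmax θ a * ∑ b, pgrad r θ b * δ b)
      ≤ norm2 (pgrad r θ) * norm2 δ := by
    rw [norm2_mul_const]
    exact mul_le_of_le_one_left (abs_nonneg _) (norm2_softmax_le_one θ) |>.trans
      (abs_sum_mul_le_norm2_mul_norm2 _ _)
  calc norm2 (hessVec r θ δ) ≤ _ := norm2_sub_le _ _
    _ ≤ _ := add_le_add hcentered hshift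
    _ = _ := by ring

theorem norm2_le_mul_exp_of_norm2_deriv_le {f f' : ℝ → Fin K → ℝ} {C : ℝ}
    (hf : ∀ t, HasDerivAt f (f' t) t) (bound : ∀ t, norm2 (f' t) ≤ C * norm2 (f t))
    {t : ℝ} (ht : 0 ≤ t) : norm2 (f t) ≤ norm2 (f 0) * exp (C * t) := by
  have hF : ∀ s, HasDerivAt (fun s => WithLp.toLp 2 (f s)) (WithLp.toLp 2 (f' s)) s :=
    fun s => (PiLp.hasFDerivAt_toLp (𝕜 := ℝ) 2 (f s)).comp_hasDerivAt s (hf s)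
  have := norm_le_gronwallBound_of_norm_deriv_right_le (ε := 0) (b := t)
    (fun s _ => (hF s).continuousAt.continuousWithinAt) (fun s _ => (hF s).hasDerivWithinAt)
    le_rfl (fun s _ => by simpa only [← norm2_eq_norm, add_zero] using bound s) t ⟨ht, le_rfl⟩
  simpa only [← norm2_eq_norm, gronwallBound_ε0, sub_zero, mul_comm C] using this

theorem exists_sub_sub_deriv_eq_half_deriv2 {f f' f'' : ℝ → ℝ}
    (hf : ∀ t, HasDerivAt f (f' t) t) (hf' : ∀ t, HasDerivAt f' (f'' t) t) :
    ∃ c ∈ Set.Ioo (0 : ℝ) 1, f 1 - f 0 - f' 0 = f'' c / 2 := by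
  set M := f 1 - f 0 - f' 0
  -- the Taylor remainder of `f 1` around `t`, corrected by a multiple of `(1 - t) ^ 2` so that
  -- it vanishes at both ends; Rolle's theorem applies to it
  set g : ℝ → ℝ := fun t => f 1 - f t - (1 - t) * f' t - (1 - t) ^ 2 * M
  have hg : ∀ t, HasDerivAt g ((1 - t) * (2 * M - f'' t)) t := by
    intro t
    have hlin : HasDerivAt (fun t : ℝ => 1 - t) (-1) t := by
      simpa using (hasDerivAt_id t).const_sub 1
    refine ((((hasDerivAt_const t (f 1)).sub (hf t)).sub (hlin.mul (hf' t))).sub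
      ((hlin.pow 2).mul_const M)).congr_deriv ?_
    ring
  obtain ⟨c, hc, hc'⟩ := exists_hasDerivAt_eq_zero one_pos
    (fun t _ => (hg t).continuousAt.continuousWithinAt) (by simp [g, M]) (fun t _ => hg t)
  refine ⟨c, hc, ?_⟩
  have : 2 * M - f'' c = 0 := (mul_eq_zero.mp hc').resolve_left (sub_ne_zero.mpr hc.2.ne')
  linarith

theorem abs_bregman_value_le (r θ δ : Fin K → ℝ) :
    |value r (θ + δ) - value r θ - ∑ a, pgrad r θ a * δ a|
      ≤ 3 / 2 * exp (3 * norm2 δ) * norm2 (pgrad r θ) * norm2 δ ^ 2 := by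
  set d := norm2 δ
  have hd : 0 ≤ d := norm2_nonneg δ
  have hslope : ∀ t, HasDerivAt (fun s => ∑ a, pgrad r (θ + s • δ) a * δ a)
      (∑ a, hessVec r (θ + t • δ) δ a * δ a) t := fun t =>
    HasDerivAt.fun_sum fun a _ => (hasDerivAt_pgrad_line r θ δ t a).mul_const (δ a)
  obtain ⟨c, hc, htaylor⟩ :=
    exists_sub_sub_deriv_eq_half_deriv2 (hasDerivAt_value_line r θ δ) hslope
  simp only [one_smul, zero_smul, add_zero] at htaylor
  have hgrowth : norm2 (pgrad r (θ + c • δ)) ≤ norm2 (pgrad r θ) * exp (3 * d * c) := by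
    simpa using norm2_le_mul_exp_of_norm2_deriv_le (f := fun t => pgrad r (θ + t • δ))
      (fun t => hasDerivAt_pi.mpr fun a => hasDerivAt_pgrad_line r θ δ t a)
      (fun t => norm2_hessVec_le r (θ + t • δ) δ) hc.1.le
  have hexp : exp (3 * d * c) ≤ exp (3 * d) :=
    exp_le_exp.mpr (mul_le_of_le_one_right (by positivity) hc.2.le)
  rw [htaylor, abs_div, abs_two]
  calc |∑ a, hessVec r (θ + c • δ) δ a * δ a| / 2
      ≤ 3 * d * norm2 (pgrad r (θ + c • δ)) * d / 2 := by
        gcongr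
        exact (abs_sum_mul_le_norm2_mul_norm2 _ _).trans
          (mul_le_mul_of_nonneg_right (norm2_hessVec_le _ _ _) hd)
    _ ≤ 3 * d * (norm2 (pgrad r θ) * exp (3 * d)) * d / 2 := by
        gcongr
        exact hgrowth.trans (mul_le_mul_of_nonneg_left hexp (norm2_nonneg _))
    _ = 3 / 2 * exp (3 * d) * norm2 (pgrad r θ) * d ^ 2 := by ring

theorem norm2_sgrad_le (θ : Fin K → ℝ) (a₀ : Fin K) (x : ℝ) :
    norm2 (sgrad θ a₀ x) ≤ √2 * |x| := by
  have hsq : ∑ a, ((if a = a₀ then (1 : ℝ) else 0) - softmax θ a) ^ 2 ≤ 2 := by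
    calc ∑ a, ((if a = a₀ then (1 : ℝ) else 0) - softmax θ a) ^ 2
        ≤ ∑ a, ((if a = a₀ then (1 : ℝ) else 0) + softmax θ a) := by
          refine sum_le_sum fun a _ => ?_
          have h0 := softmax_nonneg θ a
          have h1 := softmax_le_one θ a
          split_ifs <;> nlinarith
      _ ≤ 2 := by
          rw [sum_add_distrib, sum_ite_eq' univ a₀, if_pos (mem_univ a₀)]
          linarith [sum_softmax_le_one θ]
  exact (norm2_mul_const (fun a => (if a = a₀ then (1 : ℝ) else 0) - softmax θ a) x).trans_le
    (mul_le_mul_of_nonneg_right (Real.sqrt_le_sqrt hsq) (abs_nonneg x))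

end

theorem three_halves_mul_exp_le {d s : ℝ} (hd : 0 ≤ d) (hds : 6 * d ≤ s) (hs : s < 2) :
    3 / 2 * exp (3 * d) ≤ 3 / (2 - s) :=
  calc 3 / 2 * exp (3 * d) ≤ 3 / 2 * (1 / (1 - 3 * d)) := by
        gcongr
        exact exp_bound_div_one_sub_of_interval (by linarith) (by linarith)
    _ = 3 / (2 - 6 * d) := by rw [div_mul_div_comm, mul_one]; ring
    _ ≤ 3 / (2 - s) := div_le_div_of_nonneg_left zero_le_three (by linarith) (by linarith)

theorem nonuniform_smoothness_between_iterates_general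
    (K : ℕ) (Rmax : ℝ) (hRmax : 0 < Rmax)
    (r : Fin K → ℝ)
    (θ : Fin K → ℝ) (a₀ : Fin K) (x : ℝ) (hx : x ∈ Set.Icc (-Rmax) Rmax)
    (η : ℝ) (hη : 0 < η) (hη' : η < 2 / (9 * Rmax))
    (θ' : Fin K → ℝ) (hθ' : θ' = fun a => θ a + η * sgrad θ a₀ x a) :
    |(∑ a : Fin K, (softmax θ' a - softmax θ a) * r a)
        - ∑ a : Fin K, pgrad r θ a * (θ' a - θ a)|
      ≤ (3 / (2 - 9 * Rmax * η)) * norm2 (pgrad r θ)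
          * (norm2 (fun a => θ' a - θ a)) ^ 2 := by
  set δ : Fin K → ℝ := fun a => θ' a - θ a
  have hθ'δ : θ' = θ + δ := by ext a; simp [δ]
  have hd : norm2 δ ≤ 3 / 2 * Rmax * η := by
    have hδ : δ = fun a => sgrad θ a₀ x a * η := by ext a; simp [δ, hθ', mul_comm]
    rw [hδ, norm2_mul_const, abs_of_pos hη]
    refine mul_le_mul_of_nonneg_right ((norm2_sgrad_le θ a₀ x).trans ?_) hη.le
    exact mul_le_mul (Real.sqrt_le_iff.mpr ⟨by norm_num, by norm_num⟩) (abs_le.mpr hx)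
      (abs_nonneg x) (by norm_num)
  have hRη : 9 * Rmax * η < 2 := by
    rwa [lt_div_iff₀ (by positivity), mul_comm] at hη'
  have hconst : 3 / 2 * exp (3 * norm2 δ) ≤ 3 / (2 - 9 * Rmax * η) :=
    three_halves_mul_exp_le (norm2_nonneg δ) (by linarith) hRη
  have hbregman := abs_bregman_value_le r θ δ
  rw [← hθ'δ] at hbregman
  simp only [sub_mul, sum_sub_distrib]
  refine hbregman.trans ?_
  have hG := norm2_nonneg (pgrad r θ)
  gcongr

/-- Non-uniform smoothness between iterates: the Bregman divergence between `θ` and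
`θ' = θ + η·g(θ,a₀,x)` is controlled by the gradient norm at `θ`. -/
theorem nonuniform_smoothness_between_iterates
    (K : ℕ) (hK : 2 ≤ K) (Rmax : ℝ) (hRmax : 0 < Rmax)
    (r : Fin K → ℝ) (hr : ∀ a, r a ∈ Set.Icc (-Rmax) Rmax)
    (θ : Fin K → ℝ) (a₀ : Fin K) (x : ℝ) (hx : x ∈ Set.Icc (-Rmax) Rmax)
    (η : ℝ) (hη : 0 < η) (hη' : η < 2 / (9 * Rmax))
    (θ' : Fin K → ℝ) (hθ' : θ' = fun a => θ a + η * sgrad θ a₀ x a) :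
    |(∑ a : Fin K, (softmax θ' a - softmax θ a) * r a)
        - ∑ a : Fin K, pgrad r θ a * (θ' a - θ a)|
      ≤ (3 / (2 - 9 * Rmax * η)) * norm2 (pgrad r θ)
          * (norm2 (fun a => θ' a - θ a)) ^ 2 :=
  nonuniform_smoothness_between_iterates_general K Rmax hRmax r θ a₀ x hx η hη hη' θ' hθ'
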